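/- arXiv:2209.15240 — 2 statements merged into one kernel-verified Lean document; each statement's English description precedes it below -/
import Mathlib

section
/- Feature-transformation coverage: Let f(A, X) = 𝟙ᵀ(A + (1+ε)I)·X·Θ with D + N + Nε ≠ 0, where D = Σ_{ij} A_{ij}. Then for any target feature matrix X' ∈ ℝ^{N×F}, there exists a row vector p ∈ ℝ^{1×F} such that f(A, X + 𝟙·p) = f(A, X'). -/
/-!
The readout is linear in the features: f(A, Y) = (u Y) Θ for the row vector u = 𝟙ᵀ(A + (1+ε)I),
and u (𝟙 p) = (Σᵢ uᵢ) p with Σᵢ uᵢ = D + N + Nε. Since this scalar is nonzero,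
p = (u X' - u X) / (Σᵢ uᵢ) moves u X to u X'.
-/

open Matrix BigOperators

/-- One-layer linear GIN with sum readout: 𝟙ᵀ (A + (1+ε) I) X Θ as a row vector. -/
noncomputable def gin {n : Type*} [Fintype n] [DecidableEq n] {F Fp : ℕ}
    (ε : ℝ) (Θ : Matrix (Fin F) (Fin Fp) ℝ)
    (A : Matrix n n ℝ) (X : Matrix n (Fin F) ℝ) : Fin Fp → ℝ :=
  fun j => ∑ i, ((A + (1 + ε) • (1 : Matrix n n ℝ)) * X * Θ) i j

/-- 𝟙·p : the matrix each of whose rows is the row vector p. -/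
def prompt (n : Type*) {F : ℕ} (p : Fin F → ℝ) : Matrix n (Fin F) ℝ :=
  Matrix.of fun _ j => p j

section

variable {n : Type*} [Fintype n]

theorem vecMul_prompt {F : ℕ} (u : n → ℝ) (p : Fin F → ℝ) :
    u ᵥ* prompt n p = (∑ i, u i) • p := by
  ext j
  simp [prompt, vecMul, dotProduct, Finset.sum_mul]

theorem exists_vecMul_add_prompt_eq {F : ℕ} (u : n → ℝ) (hu : ∑ i, u i ≠ 0)
    (X X' : Matrix n (Fin F) ℝ) : ∃ p, u ᵥ* (X + prompt n p) = u ᵥ* X' :=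
  ⟨(∑ i, u i)⁻¹ • (u ᵥ* X' - u ᵥ* X), by
    rw [vecMul_add, vecMul_prompt, smul_inv_smul₀ hu, add_sub_cancel]⟩

theorem sum_one_vecMul {m : Type*} [Fintype m] (M : Matrix m n ℝ) :
    ∑ j, ((1 : m → ℝ) ᵥ* M) j = ∑ i, ∑ j, M i j := by
  simp only [vecMul, dotProduct, Pi.one_apply, one_mul]
  exact Finset.sum_comm

theorem sum_add_smul_one [DecidableEq n] (A : Matrix n n ℝ) (c : ℝ) :
    ∑ i, ∑ j, (A + c • (1 : Matrix n n ℝ)) i j = ∑ i, ∑ j, A i j + Fintype.card n * c := by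
  simp [Finset.sum_add_distrib, Matrix.one_apply]

theorem gin_eq_vecMul [DecidableEq n] {F Fp : ℕ} (ε : ℝ) (Θ : Matrix (Fin F) (Fin Fp) ℝ)
    (A : Matrix n n ℝ) (X : Matrix n (Fin F) ℝ) :
    gin ε Θ A X = (1 ᵥ* (A + (1 + ε) • 1)) ᵥ* X ᵥ* Θ := by
  ext j
  rw [gin, vecMul_vecMul, vecMul_vecMul, Matrix.mul_assoc]
  simp [vecMul, dotProduct]

end

theorem stmt2 (N F Fp : ℕ) (A : Matrix (Fin N) (Fin N) ℝ)
    (X X' : Matrix (Fin N) (Fin F) ℝ) (ε : ℝ) (Θ : Matrix (Fin F) (Fin Fp) ℝ)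
    (hD : (∑ i, ∑ j, A i j) + N + N * ε ≠ 0) :
    ∃ p : Fin F → ℝ, gin ε Θ A (X + prompt (Fin N) p) = gin ε Θ A X' := by
  have hsum : ∑ j, ((1 : Fin N → ℝ) ᵥ* (A + (1 + ε) • 1)) j ≠ 0 := by
    rw [sum_one_vecMul, sum_add_smul_one, Fintype.card_fin, mul_one_add, ← add_assoc]
    exact hD
  obtain ⟨p, hp⟩ := exists_vecMul_add_prompt_eq _ hsum X X'
  exact ⟨p, by rw [gin_eq_vecMul, gin_eq_vecMul, hp]⟩
end

section
/- Surjectivity of the prompt map: if Θ ∈ ℝ^{F×F'} has rank F' (the map p ↦ p·Θ is surjective onto ℝ^{1×F'}) and D + N + Nε ≠ 0, then for every target vector h ∈ ℝ^{1×F'} there exists a prompt p ∈ ℝ^{1×F} with 𝟙ᵀ(A + (1+ε)I)·(X + 𝟙·p)·Θ = h; i.e., the set of achievable prompted graph representations is all of ℝ^{F'}. -/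
/-!
Every row of `𝟙·p` is `p`, so the prompted representation is affine in `p`: it is the
unprompted one plus `(D + N(1 + ε)) • (p Θ)`, the scalar being the sum of all entries of
`A + (1 + ε) I`. As this scalar is nonzero and `p ↦ p Θ` is onto, so is the affine map.
-/

open Matrix BigOperators

theorem prompt_eq_vecMulVec (n : Type*) {F : ℕ} (p : Fin F → ℝ) :
    prompt n p = vecMulVec 1 p := by
  ext i j
  simp [prompt, vecMulVec_apply]

theorem one_dotProduct_mulVec_one {n α : Type*} [Fintype n] [NonAssocSemiring α]
    (M : Matrix n n α) : 1 ⬝ᵥ M *ᵥ 1 = ∑ i, ∑ j, M i j := by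
  simp [one_dotProduct, mulVec, dotProduct_one]

section

variable {n : Type*} [Fintype n] [DecidableEq n] {F Fp : ℕ}
  (ε : ℝ) (Θ : Matrix (Fin F) (Fin Fp) ℝ) (A : Matrix n n ℝ)

theorem gin_eq_one_vecMul (X : Matrix n (Fin F) ℝ) :
    gin ε Θ A X = 1 ᵥ* ((A + (1 + ε) • (1 : Matrix n n ℝ)) * X * Θ) := by
  ext j
  simp [gin, vecMul, dotProduct]

theorem gin_add (X Y : Matrix n (Fin F) ℝ) :
    gin ε Θ A (X + Y) = gin ε Θ A X + gin ε Θ A Y := by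
  simp only [gin_eq_one_vecMul, Matrix.mul_add, Matrix.add_mul, vecMul_add]

theorem gin_prompt (p : Fin F → ℝ) :
    gin ε Θ A (prompt n p) = ((∑ i, ∑ j, A i j) + Fintype.card n * (1 + ε)) • (p ᵥ* Θ) := by
  rw [gin_eq_one_vecMul, prompt_eq_vecMulVec, mul_vecMulVec, vecMulVec_mul, vecMul_vecMulVec,
    add_mulVec, dotProduct_add, one_dotProduct_mulVec_one, smul_mulVec, one_mulVec,
    dotProduct_smul, one_dotProduct_one]
  simp [mul_comm]

end

theorem stmt17 (N F Fp : ℕ) (A : Matrix (Fin N) (Fin N) ℝ)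
    (X : Matrix (Fin N) (Fin F) ℝ) (ε : ℝ) (Θ : Matrix (Fin F) (Fin Fp) ℝ)
    (hΘ : Function.Surjective (fun q : Fin F → ℝ => q ᵥ* Θ))
    (hD : (∑ i, ∑ j, A i j) + N + N * ε ≠ 0) :
    ∀ h : Fin Fp → ℝ, ∃ p : Fin F → ℝ, gin ε Θ A (X + prompt (Fin N) p) = h := by
  intro h
  set c : ℝ := (∑ i, ∑ j, A i j) + N + N * ε
  have hc : (∑ i, ∑ j, A i j) + Fintype.card (Fin N) * (1 + ε) = c := by
    rw [Fintype.card_fin]; ring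
  obtain ⟨q, hq : q ᵥ* Θ = _⟩ := hΘ (c⁻¹ • (h - gin ε Θ A X))
  refine ⟨q, ?_⟩
  rw [gin_add, gin_prompt, hc, hq, smul_smul, mul_inv_cancel₀ hD, one_smul, add_sub_cancel]
end
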